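/- Let b : ℝ^d → ℝ^d satisfy a one-sided Lipschitz condition with constant C_b. Let T > 0, N ∈ ℕ, h = T/N with 2 C_b h ≤ 1, and t_j = j h. Let (x_j)_{0 ≤ j ≤ N} be a sequence in ℝ^d and let (y_j)_{0 ≤ j ≤ N} satisfy y_0 = ξ and y_{j+1} = y_j + h b(y_{j+1}) + x_{j+1} − x_j for all j ∈ {0, …, N−1}, where ξ ∈ ℝ^d and x_0 = 0. Then max_{0 ≤ n ≤ N} |y_n| ≤ 2 e^{2 C_b T} ( |ξ| + T · max_{1 ≤ n ≤ N} |b(x_n)| ) + max_{0 ≤ n ≤ N} |x_n|. -/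

import Mathlib

/-!
Subtracting the driving path, `z_n := y_n - x_n` solves `z_{j+1} = z_j + h b(y_{j+1})`.
Testing this against `z_{j+1}` and using one-sided Lipschitz continuity between `y_{j+1}` and
`x_{j+1}` gives `(1 - C_b h) |z_{j+1}| ≤ |z_j| + h |b(x_{j+1})|`; since `2 C_b h ≤ 1` the factor
`(1 - C_b h)⁻¹` is at most `e^{2 C_b h}`, and a discrete Gronwall argument bounds `|z_n|` by
`e^{2 C_b T} (|ξ| + T max |b(x_j)|)`. Finally `|y_n| ≤ |z_n| + |x_n|`.
-/

open scoped RealInnerProductSpace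

theorem le_exp_mul_of_one_sub_mul_le {c a r : ℝ} (hc : 0 ≤ c) (hc2 : 2 * c ≤ 1) (ha : 0 ≤ a)
    (hr : 0 ≤ r) (har : (1 - c) * a ≤ r) : a ≤ Real.exp (2 * c) * r := by
  -- `(1 + 2c)(1 - c) = 1 + c(1 - 2c) ≥ 1` and `1 + 2c ≤ e^{2c}`.
  have hexp : 1 + 2 * c ≤ Real.exp (2 * c) := by linarith [Real.add_one_le_exp (2 * c)]
  calc a ≤ (1 + 2 * c) * ((1 - c) * a) := by
        nlinarith [mul_nonneg (mul_nonneg hc ha) (sub_nonneg.2 hc2)]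
    _ ≤ (1 + 2 * c) * r := by gcongr
    _ ≤ Real.exp (2 * c) * r := by gcongr

theorem le_pow_mul_add_of_le_mul_add {a : ℕ → ℝ} {q β : ℝ} {N : ℕ} (hq : 1 ≤ q) (hβ : 0 ≤ β)
    (ha : ∀ k < N, a (k + 1) ≤ q * (a k + β)) :
    ∀ n ≤ N, a n ≤ q ^ n * (a 0 + n * β) := by
  intro n hn
  induction n with
  | zero => simp
  | succ k ih =>
    have hqk : β ≤ q ^ k * β := le_mul_of_one_le_left hβ (one_le_pow₀ hq)
    calc a (k + 1) ≤ q * (a k + β) := ha k hn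
      _ ≤ q * (q ^ k * (a 0 + k * β) + q ^ k * β) := by
          gcongr q * (?_ + ?_)
          exact ih (by omega)
      _ = q ^ (k + 1) * (a 0 + (k + 1 : ℕ) * β) := by push_cast; ring

def OneSidedLipschitzWith {E : Type*} [NormedAddCommGroup E] [InnerProductSpace ℝ E]
    (C : ℝ) (b : E → E) : Prop :=
  ∀ u v, ⟪b u - b v, u - v⟫ ≤ C * ‖u - v‖ ^ 2

section InnerProductSpace

variable {E : Type*} [NormedAddCommGroup E] [InnerProductSpace ℝ E]

theorem OneSidedLipschitzWith.inner_le {C : ℝ} {b : E → E} (hb : OneSidedLipschitzWith C b)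
    (u v : E) : ⟪b u, u - v⟫ ≤ C * ‖u - v‖ ^ 2 + ‖b v‖ * ‖u - v‖ := by
  have hbv : ⟪b v, u - v⟫ ≤ ‖b v‖ * ‖u - v‖ := real_inner_le_norm _ _
  have := hb u v
  rw [inner_sub_left] at this
  linarith

theorem one_sub_mul_norm_le_of_eq_add_smul {C h m : ℝ} (hh : 0 ≤ h) (hm : 0 ≤ m) {z v w : E}
    (hw : w = z + h • v) (hv : ⟪v, w⟫ ≤ C * ‖w‖ ^ 2 + m * ‖w‖) :
    (1 - C * h) * ‖w‖ ≤ ‖z‖ + h * m := by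
  have hsq : ‖w‖ ^ 2 = ⟪w, z⟫ + h * ⟪v, w⟫ := by
    conv_lhs => rw [← real_inner_self_eq_norm_sq, hw]
    rw [inner_add_left, real_inner_smul_left, real_inner_comm z, ← hw]
  have hwz : ⟪w, z⟫ ≤ ‖w‖ * ‖z‖ := real_inner_le_norm _ _
  have hquad : ((1 - C * h) * ‖w‖) * ‖w‖ ≤ (‖z‖ + h * m) * ‖w‖ := by
    nlinarith [mul_le_mul_of_nonneg_left hv hh]
  rcases (norm_nonneg w).eq_or_lt with hw0 | hwpos
  · rw [← hw0, mul_zero]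
    positivity
  · exact le_of_mul_le_mul_right hquad hwpos

theorem OneSidedLipschitzWith.norm_sub_le_of_implicit_step {C h : ℝ} {b : E → E}
    (hb : OneSidedLipschitzWith C b) (hC : 0 ≤ C) (hh : 0 ≤ h) (hCh : 2 * C * h ≤ 1) {u v z : E}
    (hz : u - v = z + h • b u) :
    ‖u - v‖ ≤ Real.exp (2 * C * h) * (‖z‖ + h * ‖b v‖) := by
  rw [mul_assoc]
  refine le_exp_mul_of_one_sub_mul_le (mul_nonneg hC hh) (by linarith) (norm_nonneg _)
    (by positivity) ?_
  exact one_sub_mul_norm_le_of_eq_add_smul hh (norm_nonneg _) hz (hb.inner_le u v)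

theorem OneSidedLipschitzWith.norm_implicit_euler_sub_le {C h M : ℝ} {b : E → E}
    (hb : OneSidedLipschitzWith C b) (hC : 0 ≤ C) (hh : 0 ≤ h) (hCh : 2 * C * h ≤ 1)
    (hM : 0 ≤ M) {N : ℕ} {x y : ℕ → E} (hbx : ∀ j < N, ‖b (x (j + 1))‖ ≤ M)
    (hstep : ∀ j < N, y (j + 1) = y j + h • b (y (j + 1)) + x (j + 1) - x j) :
    ∀ n ≤ N, ‖y n - x n‖ ≤ Real.exp (2 * C * h) ^ n * (‖y 0 - x 0‖ + n * (h * M)) := by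
  refine le_pow_mul_add_of_le_mul_add (a := fun k => ‖y k - x k‖)
    (Real.one_le_exp (by positivity)) (mul_nonneg hh hM) fun j hj => ?_
  calc ‖y (j + 1) - x (j + 1)‖
      ≤ Real.exp (2 * C * h) * (‖y j - x j‖ + h * ‖b (x (j + 1))‖) :=
        hb.norm_sub_le_of_implicit_step hC hh hCh (by
          conv_lhs => rw [hstep j hj]
          abel)
    _ ≤ Real.exp (2 * C * h) * (‖y j - x j‖ + h * M) := by gcongr; exact hbx j hj

end InnerProductSpace

/-- Uniform bound for the implicit Euler scheme
`y_{j+1} = y_j + h b(y_{j+1}) + x_{j+1} - x_j`, `y_0 = ξ`, `x_0 = 0`,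
under `2 C_b h ≤ 1`:
`max_n ‖y_n‖ ≤ 2 e^{2 C_b T}(‖ξ‖ + T max_{1≤n≤N} ‖b(x_n)‖) + max_n ‖x_n‖`. -/
theorem implicit_euler_uniform_bound {d : ℕ}
    (b : EuclideanSpace ℝ (Fin d) → EuclideanSpace ℝ (Fin d))
    (C_b : ℝ) (hCb : 0 ≤ C_b)
    (hb : ∀ ς ζ : EuclideanSpace ℝ (Fin d),
      ⟪b ς - b ζ, ς - ζ⟫ ≤ C_b * ‖ς - ζ‖ ^ 2)
    (T : ℝ) (hT : 0 < T) (N : ℕ) (hN : 1 ≤ N)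
    (h : ℝ) (hh : h = T / N) (hCh : 2 * C_b * h ≤ 1)
    (ξ : EuclideanSpace ℝ (Fin d))
    (x : ℕ → EuclideanSpace ℝ (Fin d)) (hx0 : x 0 = 0)
    (y : ℕ → EuclideanSpace ℝ (Fin d)) (hy0 : y 0 = ξ)
    (hstep : ∀ j < N, y (j + 1) = y j + h • b (y (j + 1)) + x (j + 1) - x j) :
    ∀ n ≤ N, ‖y n‖ ≤
      2 * Real.exp (2 * C_b * T) *
        (‖ξ‖ + T * (Finset.Icc 1 N).sup' (Finset.nonempty_Icc.mpr hN)
          (fun j => ‖b (x j)‖)) +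
      (Finset.Icc 0 N).sup' (Finset.nonempty_Icc.mpr (Nat.zero_le N))
        (fun j => ‖x j‖) := by
  intro n hn
  set M := (Finset.Icc 1 N).sup' (Finset.nonempty_Icc.mpr hN) (fun j => ‖b (x j)‖)
  set X := (Finset.Icc 0 N).sup' (Finset.nonempty_Icc.mpr (Nat.zero_le N)) (fun j => ‖x j‖)
  have hh0 : 0 ≤ h := hh ▸ by positivity
  have hbxM : ∀ j < N, ‖b (x (j + 1))‖ ≤ M := fun j hj =>
    Finset.le_sup' (fun j => ‖b (x j)‖) (Finset.mem_Icc.2 ⟨by omega, hj⟩)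
  have hM : 0 ≤ M := (norm_nonneg _).trans (hbxM 0 hN)
  have hz := OneSidedLipschitzWith.norm_implicit_euler_sub_le hb hCb hh0 hCh hM hbxM hstep n hn
  rw [hy0, hx0, sub_zero] at hz
  have hnh : n * h ≤ T := by
    rw [hh, mul_div_assoc', div_le_iff₀ (by exact_mod_cast hN), mul_comm]
    gcongr
  have hexp : Real.exp (2 * C_b * h) ^ n ≤ Real.exp (2 * C_b * T) := by
    rw [← Real.exp_nat_mul]
    exact Real.exp_le_exp.2 (by nlinarith)
  have hnhM : n * (h * M) ≤ T * M := by
    rw [← mul_assoc]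
    exact mul_le_mul_of_nonneg_right hnh hM
  replace hz : ‖y n - x n‖ ≤ Real.exp (2 * C_b * T) * (‖ξ‖ + T * M) := hz.trans (by gcongr)
  have hxX : ‖x n‖ ≤ X := Finset.le_sup' (fun j => ‖x j‖) (Finset.mem_Icc.2 ⟨n.zero_le, hn⟩)
  have hpos : 0 ≤ Real.exp (2 * C_b * T) * (‖ξ‖ + T * M) := by positivity
  calc ‖y n‖ ≤ ‖y n - x n‖ + ‖x n‖ := norm_le_norm_sub_add _ _
    _ ≤ _ := by linarith
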